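/- arXiv:1610.04293 — 2 statements merged into one kernel-verified Lean document; each statement's English description precedes it below -/
import Mathlib

section
/- Let (X_t) be a reversible Markov chain on a countable state space with symmetric kernel Q of spectral radius ρ_Q, and let A be a finite subset of the state space. Started from the uniform distribution on A, the probability that the chain returns to A at some positive time is at most ρ_Q. -/
/-!
Let `P` be `Q` with all transitions into `A` suppressed and `H = ∑_{t<T} ∑_{a∈A} P^t(a, ·)` the
truncated Green function of the chain killed on returning to `A`. Then `H = 1` on `A`, `H ≤ HQ`
off `A` (renewal: `H_{T+1} = 1_A + H_T P`, and `P = Q` on columns outside `A`), and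
`D = ∑_{b∈A} (HQ)(b)` is the probability mass that has returned to `A` by time `T`. Pairing `HQ - H`
with `H` gives `D - |A| ≤ ⟨H, HQ⟩ - ‖H‖² ≤ (ρ - 1) ‖H‖²`, and `‖H‖² ≥ |A|`, so `D ≤ ρ |A|` when
`ρ ≤ 1`; pairing it with `1` instead gives `D ≤ |A|` since `Q` does not increase mass, which
covers `ρ > 1`. Letting `T → ∞` bounds the total return probability.
-/

open Classical

/-- `kpow Q n` is the `n`-step transition kernel obtained from the one-step kernel `Q`. -/
noncomputable def kpow {V : Type*} (Q : V → V → ℝ) : ℕ → V → V → ℝ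
  | 0 => fun x y => if x = y then 1 else 0
  | (n + 1) => fun x y => ∑' z, kpow Q n x z * Q z y

/-- The kernel `Q` with all transitions into `A` suppressed. -/
noncomputable def kAvoid {V : Type*} (Q : V → V → ℝ) (A : Set V) : V → V → ℝ :=
  fun x y => if y ∈ A then 0 else Q x y

/-- `returnProb Q A a = P_a[T_A^+ < ∞]`: the probability that the chain with kernel `Q`
started at `a` visits `A` at some positive time (decomposed according to the first
positive visit time). -/
noncomputable def returnProb {V : Type*} (Q : V → V → ℝ) (A : Finset V) (a : V) : ℝ :=
  ∑' t : ℕ, ∑' z : V, kpow (kAvoid Q (A : Set V)) t a z * ∑ b ∈ A, Q z b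

open Finset

section

variable {V : Type*}

theorem summable_mul_of_nonneg {ι : Type*} {f g : ι → ℝ} (hf : Summable f) (hg : Summable g)
    (hf0 : 0 ≤ f) (hg0 : 0 ≤ g) : Summable fun i => f i * g i :=
  (hf.mul_of_nonneg hg hf0 hg0).comp_injective (i := fun i => (i, i))
    fun _ _ h => congrArg Prod.fst h

noncomputable def kvecMul (F : V → ℝ) (K : V → V → ℝ) (y : V) : ℝ := ∑' x, F x * K x y

structure IsSubstochastic (K : V → V → ℝ) : Prop where
  nonneg : ∀ x y, 0 ≤ K x y
  summable : ∀ x, Summable (K x)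
  tsum_le_one : ∀ x, ∑' y, K x y ≤ 1

section Substochastic

variable {K : V → V → ℝ} {F : V → ℝ}

theorem IsSubstochastic.of_hasSum_one (h0 : ∀ x y, 0 ≤ K x y) (h1 : ∀ x, HasSum (K x) 1) :
    IsSubstochastic K :=
  ⟨h0, fun x => (h1 x).summable, fun x => (h1 x).tsum_eq.le⟩

theorem IsSubstochastic.le_one (hK : IsSubstochastic K) (x y : V) : K x y ≤ 1 :=
  ((hK.summable x).le_tsum y fun z _ => hK.nonneg x z).trans (hK.tsum_le_one x)

theorem IsSubstochastic.avoid (hK : IsSubstochastic K) (A : Set V) :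
    IsSubstochastic (kAvoid K A) := by
  have h0 : ∀ x y, 0 ≤ kAvoid K A x y := fun x y => by
    unfold kAvoid; split_ifs <;> simp [hK.nonneg x y]
  have hle : ∀ x y, kAvoid K A x y ≤ K x y := fun x y => by
    unfold kAvoid; split_ifs <;> simp [hK.nonneg x y]
  have hs : ∀ x, Summable (kAvoid K A x) := fun x =>
    (hK.summable x).of_nonneg_of_le (h0 x) (hle x)
  exact ⟨h0, hs, fun x => ((hs x).tsum_le_tsum (hle x) (hK.summable x)).trans (hK.tsum_le_one x)⟩

theorem IsSubstochastic.summable_mul (hK : IsSubstochastic K) (hF : Summable F) (y : V) :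
    Summable fun x => F x * K x y :=
  hF.norm.of_norm_bounded fun x => by
    rw [norm_mul, Real.norm_of_nonneg (hK.nonneg x y)]
    exact mul_le_of_le_one_right (norm_nonneg _) (hK.le_one x y)

theorem IsSubstochastic.hasSum_kvecMul (hK : IsSubstochastic K) (hF0 : 0 ≤ F) (hF : Summable F) :
    HasSum (kvecMul F K) (∑' x, F x * ∑' y, K x y) := by
  let G : V × V → ℝ := fun p => F p.1 * K p.1 p.2
  have hG : Summable G := by
    refine (summable_prod_of_nonneg fun p => mul_nonneg (hF0 p.1) (hK.nonneg p.1 p.2)).2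
      ⟨fun x => (hK.summable x).mul_left (F x), hF.of_nonneg_of_le (fun x => ?_) fun x => ?_⟩
    · exact tsum_nonneg fun y => mul_nonneg (hF0 x) (hK.nonneg x y)
    · dsimp only; rw [tsum_mul_left]; exact mul_le_of_le_one_right (hF0 x) (hK.tsum_le_one x)
  have hcols : Summable (kvecMul F K) := hG.prod_symm.prod
  convert hcols.hasSum using 1
  simp only [kvecMul, ← tsum_mul_left]
  exact (hG.tsum_comm (f := fun x y => F x * K x y)).symm

theorem IsSubstochastic.kvecMul_nonneg (hK : IsSubstochastic K) (hF0 : 0 ≤ F) :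
    0 ≤ kvecMul F K :=
  fun y => tsum_nonneg fun x => mul_nonneg (hF0 x) (hK.nonneg x y)

theorem IsSubstochastic.summable_kvecMul (hK : IsSubstochastic K) (hF0 : 0 ≤ F)
    (hF : Summable F) : Summable (kvecMul F K) :=
  (hK.hasSum_kvecMul hF0 hF).summable

theorem IsSubstochastic.tsum_kvecMul_le (hK : IsSubstochastic K) (hF0 : 0 ≤ F)
    (hF : Summable F) : ∑' y, kvecMul F K y ≤ ∑' x, F x := by
  rw [(hK.hasSum_kvecMul hF0 hF).tsum_eq]
  have hle (x : V) : F x * ∑' y, K x y ≤ F x := mul_le_of_le_one_right (hF0 x) (hK.tsum_le_one x)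
  exact (hF.of_nonneg_of_le (fun x => mul_nonneg (hF0 x) (tsum_nonneg (hK.nonneg x))) hle)
    |>.tsum_le_tsum hle hF

theorem IsSubstochastic.kvecMul_sum {ι : Type*} (hK : IsSubstochastic K) (s : Finset ι)
    {F : ι → V → ℝ} (hF : ∀ i ∈ s, Summable (F i)) (y : V) :
    kvecMul (fun x => ∑ i ∈ s, F i x) K y = ∑ i ∈ s, kvecMul (F i) K y := by
  simp only [kvecMul, Finset.sum_mul]
  exact Summable.tsum_finsetSum fun i hi => hK.summable_mul (hF i hi) y

theorem IsSubstochastic.tsum_mul_sum (hK : IsSubstochastic K) (hF : Summable F) (s : Finset V) :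
    ∑' x, F x * ∑ y ∈ s, K x y = ∑ y ∈ s, kvecMul F K y := by
  simp only [kvecMul, Finset.mul_sum]
  exact Summable.tsum_finsetSum fun y _ => hK.summable_mul hF y

theorem IsSubstochastic.pow (hK : IsSubstochastic K) (n : ℕ) : IsSubstochastic (kpow K n) := by
  induction n with
  | zero =>
    have h (x : V) : HasSum (kpow K 0 x) 1 := by
      simpa [kpow, eq_comm] using hasSum_ite_eq x (1 : ℝ)
    exact .of_hasSum_one (fun x y => by simp only [kpow]; split_ifs <;> norm_num) h
  | succ n ih =>
    refine ⟨fun x => ?_, fun x => ?_, fun x => ?_⟩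
    · exact hK.kvecMul_nonneg (ih.nonneg x)
    · exact hK.summable_kvecMul (ih.nonneg x) (ih.summable x)
    · exact (hK.tsum_kvecMul_le (ih.nonneg x) (ih.summable x)).trans (ih.tsum_le_one x)

end Substochastic

theorem kvecMul_kAvoid (F : V → ℝ) (Q : V → V → ℝ) (A : Set V) (y : V) :
    kvecMul F (kAvoid Q A) y = if y ∈ A then 0 else kvecMul F Q y := by
  split_ifs with hy <;> simp [kvecMul, kAvoid, hy]

/-- Truncated Green function of the chain killed on returning to `A`, summed over starting points
in `A`: the expected number of visits to `z` at times `t < T` before the first return. -/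
noncomputable def visits (Q : V → V → ℝ) (A : Finset V) (T : ℕ) (z : V) : ℝ :=
  ∑ t ∈ range T, ∑ a ∈ A, kpow (kAvoid Q A) t a z

section Visits

variable {Q : V → V → ℝ}

theorem visits_nonneg (hQ : IsSubstochastic Q) (A : Finset V) (T : ℕ) :
    0 ≤ visits Q A T := fun z =>
  sum_nonneg fun t _ => sum_nonneg fun a _ => ((hQ.avoid A).pow t).nonneg a z

theorem summable_visits (hQ : IsSubstochastic Q) (A : Finset V) (T : ℕ) :
    Summable (visits Q A T) :=
  summable_sum fun t _ => summable_sum fun a _ => ((hQ.avoid A).pow t).summable a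

theorem visits_le_succ (hQ : IsSubstochastic Q) (A : Finset V) (T : ℕ) (z : V) :
    visits Q A T z ≤ visits Q A (T + 1) z := by
  rw [visits, visits, sum_range_succ]
  exact le_add_of_nonneg_right (sum_nonneg fun a _ => ((hQ.avoid A).pow T).nonneg a z)

theorem kvecMul_visits {K : V → V → ℝ} (hQ : IsSubstochastic Q) (A : Finset V)
    (hK : IsSubstochastic K) (T : ℕ) (y : V) :
    kvecMul (visits Q A T) K y = ∑ t ∈ range T, ∑ a ∈ A, kvecMul (kpow (kAvoid Q A) t a) K y := by
  unfold visits
  rw [hK.kvecMul_sum _ fun t _ => summable_sum fun a _ => ((hQ.avoid A).pow t).summable a]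
  exact sum_congr rfl fun t _ => hK.kvecMul_sum _ (fun a _ => ((hQ.avoid A).pow t).summable a) y

theorem visits_succ (hQ : IsSubstochastic Q) (A : Finset V) (T : ℕ) (z : V) :
    visits Q A (T + 1) z = (if z ∈ A then 1 else 0) + kvecMul (visits Q A T) (kAvoid Q A) z := by
  rw [kvecMul_visits hQ A (hQ.avoid A), visits, sum_range_succ', add_comm]
  congr 1
  simp [kpow]

theorem visits_succ_of_mem (hQ : IsSubstochastic Q) (A : Finset V) (T : ℕ) {z : V} (hz : z ∈ A) :
    visits Q A (T + 1) z = 1 := by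
  simp [visits_succ hQ A, kvecMul_kAvoid, hz]

theorem visits_le_kvecMul (hQ : IsSubstochastic Q) (A : Finset V) (T : ℕ) {z : V} (hz : z ∉ A) :
    visits Q A T z ≤ kvecMul (visits Q A T) Q z := by
  have := visits_succ hQ A T z
  simp only [kvecMul_kAvoid, Finset.mem_coe, hz, if_false, zero_add] at this
  exact this ▸ visits_le_succ hQ A T z

end Visits

def OpNormLE (Q : V → V → ℝ) (ρ : ℝ) : Prop :=
  ∀ f g : V →₀ ℝ, |∑ x ∈ f.support, ∑ y ∈ g.support, f x * Q x y * g y| ≤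
    ρ * Real.sqrt (∑ x ∈ f.support, f x ^ 2) * Real.sqrt (∑ y ∈ g.support, g y ^ 2)

section OpNormLE

variable {Q : V → V → ℝ} {ρ : ℝ}

theorem OpNormLE.nonneg (hnorm : OpNormLE Q ρ) (v : V) : 0 ≤ ρ := by
  have h := hnorm (Finsupp.single v 1) (Finsupp.single v 1)
  simp only [Finsupp.support_single v one_ne_zero, sum_singleton,
    Finsupp.single_eq_same, one_pow, Real.sqrt_one, mul_one] at h
  exact (abs_nonneg _).trans h

theorem OpNormLE.sum_sum_le (hnorm : OpNormLE Q ρ) (s : Finset V) (f : V → ℝ) :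
    ∑ x ∈ s, ∑ y ∈ s, f x * Q x y * f y ≤ ρ * ∑ x ∈ s, f x ^ 2 := by
  let φ : V →₀ ℝ := Finsupp.indicator s fun x _ => f x
  have hφ (g : V → ℝ → ℝ) (hg : ∀ x, g x 0 = 0) :
      ∑ x ∈ φ.support, g x (φ x) = ∑ x ∈ s, g x (f x) :=
    (φ.sum_of_support_subset (Finsupp.support_indicator_subset _ _) g fun x _ => hg x).trans
      (sum_congr rfl fun x hx => by rw [Finsupp.indicator_of_mem hx])
  have hsq : ∑ x ∈ φ.support, φ x ^ 2 = ∑ x ∈ s, f x ^ 2 := hφ (fun _ c => c ^ 2) (by simp)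
  have hbil : ∑ x ∈ φ.support, ∑ y ∈ φ.support, φ x * Q x y * φ y
      = ∑ x ∈ s, ∑ y ∈ s, f x * Q x y * f y := by
    rw [← hφ (fun x c => ∑ y ∈ s, c * Q x y * f y) (by simp)]
    exact sum_congr rfl fun x _ => hφ (fun y c => φ x * Q x y * c) (by simp)
  have h := hnorm φ φ
  rw [hsq, hbil, mul_assoc, Real.mul_self_sqrt (sum_nonneg fun x _ => sq_nonneg _)] at h
  exact (le_abs_self _).trans h

theorem OpNormLE.tsum_mul_kvecMul_le (hnorm : OpNormLE Q ρ) (hρ : 0 ≤ ρ) (hQ : IsSubstochastic Q)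
    {h : V → ℝ} (h0 : 0 ≤ h) (hs : Summable h) :
    ∑' y, h y * kvecMul h Q y ≤ ρ * ∑' x, h x ^ 2 := by
  let G : V × V → ℝ := fun p => h p.1 * Q p.1 p.2 * h p.2
  have hG0 : 0 ≤ G := fun p => mul_nonneg (mul_nonneg (h0 p.1) (hQ.nonneg p.1 p.2)) (h0 p.2)
  have hG : Summable G := (hs.mul_of_nonneg hs h0 h0).of_nonneg_of_le hG0 fun p =>
    mul_le_mul_of_nonneg_right (mul_le_of_le_one_right (h0 p.1) (hQ.le_one p.1 p.2)) (h0 p.2)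
  have hsq : Summable fun x => h x ^ 2 := by
    simpa only [sq] using summable_mul_of_nonneg hs hs h0 h0
  calc ∑' y, h y * kvecMul h Q y = ∑' p, G p := by
        simp only [kvecMul, ← tsum_mul_left]
        rw [hG.tsum_prod' hG.prod_factor, ← hG.tsum_comm (f := fun x y => G (x, y))]
        exact tsum_congr fun y => tsum_congr fun x => by ring
    _ ≤ ρ * ∑' x, h x ^ 2 := hG.tsum_le_of_sum_le fun u => by
        classical
        let s := u.image Prod.fst ∪ u.image Prod.snd
        calc ∑ p ∈ u, G p ≤ ∑ p ∈ s ×ˢ s, G p :=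
              sum_le_sum_of_subset_of_nonneg
                (subset_product.trans (product_subset_product subset_union_left subset_union_right))
                fun p _ _ => hG0 p
          _ = ∑ x ∈ s, ∑ y ∈ s, h x * Q x y * h y := sum_product _ _ _
          _ ≤ ρ * ∑ x ∈ s, h x ^ 2 := hnorm.sum_sum_le s h
          _ ≤ ρ * ∑' x, h x ^ 2 :=
              mul_le_mul_of_nonneg_left (hsq.sum_le_tsum s fun x _ => sq_nonneg _) hρ

end OpNormLE

theorem sum_sub_card_le_tsum_mul {A : Finset V} {h u ψ : V → ℝ} (hψ0 : 0 ≤ ψ)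
    (hA : ∀ z ∈ A, h z = 1 ∧ ψ z = 1) (hout : ∀ z ∉ A, h z ≤ u z)
    (hs : Summable fun z => ψ z * (u z - h z)) :
    ∑ z ∈ A, u z - #A ≤ ∑' z, ψ z * (u z - h z) :=
  calc ∑ z ∈ A, u z - #A = ∑ z ∈ A, (u z - 1) := by simp [sum_sub_distrib]
    _ = ∑ z ∈ A, ψ z * (u z - h z) :=
        sum_congr rfl fun z hz => by rw [(hA z hz).1, (hA z hz).2, one_mul]
    _ ≤ ∑' z, ψ z * (u z - h z) :=
        hs.sum_le_tsum A fun z hz => mul_nonneg (hψ0 z) (sub_nonneg.2 (hout z hz))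

theorem sum_kvecMul_visits_le {Q : V → V → ℝ} {ρ : ℝ} (hQ : IsSubstochastic Q)
    (hnorm : OpNormLE Q ρ) (hρ : 0 ≤ ρ) (A : Finset V) (T : ℕ) :
    ∑ b ∈ A, kvecMul (visits Q A T) Q b ≤ ρ * #A := by
  obtain _ | T := T
  · simpa [visits, kvecMul] using mul_nonneg hρ (Nat.cast_nonneg #A)
  · set H := visits Q A (T + 1)
    set D := ∑ b ∈ A, kvecMul H Q b
    have hH0 : 0 ≤ H := visits_nonneg hQ A _
    have hH : Summable H := summable_visits hQ A _
    have hQH : Summable (kvecMul H Q) := hQ.summable_kvecMul hH0 hH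
    have hA (z) (hz : z ∈ A) : H z = 1 := visits_succ_of_mem hQ A T hz
    have hout (z) (hz : z ∉ A) : H z ≤ kvecMul H Q z := visits_le_kvecMul hQ A _ hz
    have hD₁ : D - #A ≤ 0 := by
      have := sum_sub_card_le_tsum_mul (ψ := 1) (fun _ => zero_le_one) (fun z hz => ⟨hA z hz, rfl⟩)
        hout (by simpa using hQH.sub hH)
      simp only [Pi.one_apply, one_mul, hQH.tsum_sub hH] at this
      linarith [hQ.tsum_kvecMul_le hH0 hH]
    have hHQH : Summable fun z => H z * kvecMul H Q z :=
      summable_mul_of_nonneg hH hQH hH0 (hQ.kvecMul_nonneg hH0)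
    have hHH : Summable fun z => H z ^ 2 := by
      simpa only [sq] using summable_mul_of_nonneg hH hH hH0 hH0
    have hD₂ : D - #A ≤ (ρ - 1) * ∑' z, H z ^ 2 := by
      have := sum_sub_card_le_tsum_mul hH0 (fun z hz => ⟨hA z hz, hA z hz⟩) hout
        (by simpa only [mul_sub, sq] using hHQH.sub hHH)
      simp only [mul_sub, ← sq, hHQH.tsum_sub hHH] at this
      linarith [hnorm.tsum_mul_kvecMul_le hρ hQ hH0 hH]
    have hN : (#A : ℝ) ≤ ∑' z, H z ^ 2 := by
      calc (#A : ℝ) = ∑ z ∈ A, H z ^ 2 := by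
            rw [sum_congr rfl fun z hz => by rw [hA z hz, one_pow]]; simp
        _ ≤ ∑' z, H z ^ 2 := hHH.sum_le_tsum A fun z _ => sq_nonneg _
    rcases le_or_gt ρ 1 with hρ1 | hρ1 <;> nlinarith

theorem sum_tsum_le_of_sum_range_le {ι : Type*} {s : Finset ι} {f : ι → ℕ → ℝ} {c : ℝ}
    (hf : ∀ i t, 0 ≤ f i t) (h : ∀ T, ∑ t ∈ range T, ∑ i ∈ s, f i t ≤ c) :
    ∑ i ∈ s, ∑' t, f i t ≤ c := by
  have hs : ∀ i ∈ s, Summable (f i) := fun i hi => summable_of_sum_range_le (hf i) fun T =>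
    (sum_le_sum fun t _ => single_le_sum (fun j _ => hf j t) hi).trans (h T)
  rw [← Summable.tsum_finsetSum hs]
  exact (summable_sum hs).tsum_le_of_sum_range_le h

theorem returnProb_eq_tsum {Q : V → V → ℝ} (hQ : IsSubstochastic Q) (A : Finset V) (a : V) :
    returnProb Q A a = ∑' t, ∑ b ∈ A, kvecMul (kpow (kAvoid Q A) t a) Q b :=
  tsum_congr fun t => hQ.tsum_mul_sum (((hQ.avoid A).pow t).summable a) A

theorem sum_kvecMul_visits {Q : V → V → ℝ} (hQ : IsSubstochastic Q) (A : Finset V) (T : ℕ) :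
    ∑ b ∈ A, kvecMul (visits Q A T) Q b
      = ∑ t ∈ range T, ∑ a ∈ A, ∑ b ∈ A, kvecMul (kpow (kAvoid Q A) t a) Q b := by
  simp only [kvecMul_visits hQ A hQ]
  rw [sum_comm]
  exact sum_congr rfl fun t _ => sum_comm

end

theorem stmt10_general {V : Type*} (Q : V → V → ℝ) (ρQ : ℝ)
    (hnonneg : ∀ x y, 0 ≤ Q x y)
    (hstoch : ∀ x, HasSum (Q x) 1)
    (hnorm : ∀ f g : V →₀ ℝ,
      |∑ x ∈ f.support, ∑ y ∈ g.support, f x * Q x y * g y| ≤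
        ρQ * Real.sqrt (∑ x ∈ f.support, f x ^ 2) * Real.sqrt (∑ y ∈ g.support, g y ^ 2))
    (A : Finset V) (hA : A.Nonempty) :
    (A.card : ℝ)⁻¹ * ∑ a ∈ A, returnProb Q A a ≤ ρQ := by
  have hQ : IsSubstochastic Q := .of_hasSum_one hnonneg hstoch
  have hρ : 0 ≤ ρQ := OpNormLE.nonneg hnorm hA.choose
  have hsum : ∑ a ∈ A, returnProb Q A a ≤ ρQ * A.card := by
    simp only [returnProb_eq_tsum hQ]
    refine sum_tsum_le_of_sum_range_le (fun a t => ?_) fun T => ?_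
    · exact sum_nonneg fun b _ => hQ.kvecMul_nonneg (((hQ.avoid A).pow t).nonneg a) b
    · rw [← sum_kvecMul_visits hQ]
      exact sum_kvecMul_visits_le hQ hnorm hρ A T
  rw [inv_mul_le_iff₀ (by exact_mod_cast hA.card_pos)]
  linarith

/-- Let `(X_t)` be a reversible Markov chain on a countable state space with symmetric
kernel `Q` whose `ℓ²` operator norm (spectral radius) is at most `ρ_Q`, and let `A` be a
finite nonempty subset of the state space. Started from the uniform distribution on `A`,
the probability that the chain returns to `A` at some positive time is at most `ρ_Q`. -/
theorem stmt10 {V : Type*} [Countable V] (Q : V → V → ℝ) (ρQ : ℝ)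
    (hnonneg : ∀ x y, 0 ≤ Q x y)
    (hstoch : ∀ x, HasSum (Q x) 1)
    (hsym : ∀ x y, Q x y = Q y x)
    (hnorm : ∀ f g : V →₀ ℝ,
      |∑ x ∈ f.support, ∑ y ∈ g.support, f x * Q x y * g y| ≤
        ρQ * Real.sqrt (∑ x ∈ f.support, f x ^ 2) * Real.sqrt (∑ y ∈ g.support, g y ^ 2))
    (A : Finset V) (hA : A.Nonempty) :
    (A.card : ℝ)⁻¹ * ∑ a ∈ A, returnProb Q A a ≤ ρQ :=
  stmt10_general Q ρQ hnonneg hstoch hnorm A hA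
end

section
/- Let (Z_λ)_{λ>0} be Poisson(λ) random variables. The distribution of Z_λ conditioned on Z_λ ≥ 1 is stochastically increasing in λ: for λ₁ ≤ λ₂ and every k, P[Z_{λ₁} ≥ k | Z_{λ₁} ≥ 1] ≤ P[Z_{λ₂} ≥ k | Z_{λ₂} ≥ 1]. -/
/-!
The Poisson laws have monotone likelihood ratio: `P[Z_{λ₂} = n] / P[Z_{λ₁} = n]` is
`e^{λ₁ - λ₂} (λ₂ / λ₁)^n`, nondecreasing in `n`. Split `{n ≥ 1}` into the part below `k` and
the part from `k` on; comparing every mass below `k` with every mass from `k` on gives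
`P₁[≥ k] P₂[1 ≤ · < k] ≤ P₂[≥ k] P₁[1 ≤ · < k]`, which rearranges to the claim.
-/

open MeasureTheory ProbabilityTheory

/-- `ν {n} / μ {n}` is nondecreasing in `n`, stated without division. -/
def MonotoneLikelihoodRatio {α : Type*} [LE α] [MeasurableSpace α] (μ ν : Measure α) : Prop :=
  ∀ ⦃m j : α⦄, m ≤ j → μ {j} * ν {m} ≤ ν {j} * μ {m}

namespace MonotoneLikelihoodRatio

variable {α : Type*} [MeasurableSpace α] [Countable α] [MeasurableSingletonClass α]
  {μ ν : Measure α}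

theorem measure_mul_measure_le [LE α] (h : MonotoneLikelihoodRatio μ ν) {s t : Set α}
    (hst : ∀ m ∈ s, ∀ j ∈ t, m ≤ j) : μ t * ν s ≤ ν t * μ s := by
  have expand : ∀ ρ σ : Measure α, ρ t * σ s =
      ∑' j, ∑' m, t.indicator (fun j => ρ {j}) j * s.indicator (fun m => σ {m}) m := by
    intro ρ σ
    simp_rw [ENNReal.tsum_mul_left, ENNReal.tsum_mul_right,
      Measure.tsum_indicator_apply_singleton _ _ (Set.to_countable _).measurableSet]
  rw [expand, expand]
  refine ENNReal.tsum_le_tsum fun j => ENNReal.tsum_le_tsum fun m => ?_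
  by_cases hj : j ∈ t
  · by_cases hm : m ∈ s
    · simpa only [Set.indicator_of_mem hj, Set.indicator_of_mem hm] using h (hst m hm j hj)
    · simp [Set.indicator_of_notMem hm]
  · simp [Set.indicator_of_notMem hj]

theorem measure_inter_mul_le [LinearOrder α] (h : MonotoneLikelihoodRatio μ ν) {s t : Set α}
    (ht : IsUpperSet t) : μ (t ∩ s) * ν s ≤ ν (t ∩ s) * μ s := by
  have below : ∀ m ∈ s \ t, ∀ j ∈ t ∩ s, m ≤ j := fun m hm j hj =>
    le_of_lt (not_le.1 fun hjm => hm.2 (ht hjm hj.1))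
  have split : ∀ ρ : Measure α, ρ s = ρ (s \ t) + ρ (t ∩ s) := fun ρ => by
    rw [Set.inter_comm, add_comm, measure_inter_add_sdiff _ (Set.to_countable t).measurableSet]
  calc μ (t ∩ s) * ν s = μ (t ∩ s) * ν (s \ t) + μ (t ∩ s) * ν (t ∩ s) := by rw [split, mul_add]
    _ ≤ ν (t ∩ s) * μ (s \ t) + ν (t ∩ s) * μ (t ∩ s) := by
      gcongr ?_ + ?_
      · exact h.measure_mul_measure_le below
      · rw [mul_comm]
    _ = ν (t ∩ s) * μ s := by rw [split μ, mul_add]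

theorem measure_inter_div_le [LinearOrder α] [IsFiniteMeasure μ] [IsFiniteMeasure ν]
    (h : MonotoneLikelihoodRatio μ ν) {s t : Set α} (ht : IsUpperSet t) (hν : ν s ≠ 0) :
    μ (t ∩ s) / μ s ≤ ν (t ∩ s) / ν s := by
  rcases eq_or_ne (μ s) 0 with hμ | hμ
  · simp [measure_mono_null Set.inter_subset_right hμ]
  rw [ENNReal.div_le_iff_le_mul (.inl hμ) (.inl (measure_ne_top μ s)), div_eq_mul_inv,
    mul_right_comm, ← div_eq_mul_inv,
    ENNReal.le_div_iff_mul_le (.inl hν) (.inl (measure_ne_top ν s))]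
  exact h.measure_inter_mul_le ht

end MonotoneLikelihoodRatio

theorem pow_mul_pow_le_pow_mul_pow {R : Type*} [CommSemiring R] [PartialOrder R] [IsOrderedRing R]
    {a b : R} (ha : 0 ≤ a) (hab : a ≤ b) {m j : ℕ} (hmj : m ≤ j) :
    a ^ j * b ^ m ≤ b ^ j * a ^ m := by
  obtain ⟨d, rfl⟩ := Nat.exists_eq_add_of_le hmj
  calc a ^ (m + d) * b ^ m = (a ^ m * b ^ m) * a ^ d := by ring
    _ ≤ (a ^ m * b ^ m) * b ^ d := by have hb := ha.trans hab; gcongr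
    _ = b ^ (m + d) * a ^ m := by ring

theorem monotoneLikelihoodRatio_poissonMeasure {r₁ r₂ : NNReal} (h : r₁ ≤ r₂) :
    MonotoneLikelihoodRatio (poissonMeasure r₁) (poissonMeasure r₂) := by
  intro m j hmj
  simp only [poissonMeasure_singleton]
  rw [← ENNReal.ofReal_mul (by positivity), ← ENNReal.ofReal_mul (by positivity)]
  refine ENNReal.ofReal_le_ofReal ?_
  have hpow := pow_mul_pow_le_pow_mul_pow r₁.2 (NNReal.coe_le_coe.2 h) hmj
  set c := Real.exp (-r₁) * Real.exp (-r₂) / (j.factorial * m.factorial)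
  calc _ = c * ((r₁ : ℝ) ^ j * (r₂ : ℝ) ^ m) := by ring
    _ ≤ c * ((r₂ : ℝ) ^ j * (r₁ : ℝ) ^ m) := mul_le_mul_of_nonneg_left hpow (by positivity)
    _ = _ := by ring

theorem poissonMeasure_setOf_one_le_ne_zero {r : NNReal} (hr : 0 < r) :
    poissonMeasure r {n | 1 ≤ n} ≠ 0 := by
  refine (measure_pos_of_superset (Set.singleton_subset_iff.2 le_rfl) ?_).ne'
  rw [poissonMeasure_singleton]
  positivity

theorem stmt14_general (r₁ r₂ : NNReal) (h12 : r₁ ≤ r₂) (k : ℕ) :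
    poissonMeasure r₁ {n | k ≤ n ∧ 1 ≤ n} / poissonMeasure r₁ {n | 1 ≤ n} ≤
      poissonMeasure r₂ {n | k ≤ n ∧ 1 ≤ n} / poissonMeasure r₂ {n | 1 ≤ n} := by
  rcases h12.eq_or_lt with rfl | hlt
  · exact le_rfl
  exact (monotoneLikelihoodRatio_poissonMeasure h12).measure_inter_div_le (isUpperSet_Ici k)
    (poissonMeasure_setOf_one_le_ne_zero (pos_of_gt hlt))

/-- Let `Z_λ ~ Poisson(λ)`.  The distribution of `Z_λ` conditioned on `Z_λ ≥ 1` is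
stochastically increasing in `λ`: for `λ₁ ≤ λ₂` (with `λ₁ > 0`) and every `k`,
`P[Z_{λ₁} ≥ k | Z_{λ₁} ≥ 1] ≤ P[Z_{λ₂} ≥ k | Z_{λ₂} ≥ 1]`. -/
theorem stmt14 (r₁ r₂ : NNReal) (h0 : 0 < r₁) (h12 : r₁ ≤ r₂) (k : ℕ) :
    poissonMeasure r₁ {n | k ≤ n ∧ 1 ≤ n} / poissonMeasure r₁ {n | 1 ≤ n} ≤
      poissonMeasure r₂ {n | k ≤ n ∧ 1 ≤ n} / poissonMeasure r₂ {n | 1 ≤ n} :=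
  stmt14_general r₁ r₂ h12 k
end
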